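/- arXiv:1112.3012 — 2 statements merged into one kernel-verified Lean document; each statement's English description precedes it below -/
import Mathlib

section
/- Suppose g : (0,∞) → [0,∞) satisfies sup_{x>0} x²|g''(x)| < ∞. Let V₀(S,t) = e^{−r(T−t)} E[g(S · e^{σ(Z_T − Z_t) + (r − σ²/2)(T−t)})] where Z is a standard Brownian motion (risk-neutral Black-Scholes price). Then for all S > 0 and t ∈ [0,T], |S² ∂²V₀/∂S²(S,t)| ≤ sup_{x>0} x²|g''(x)|. -/
/-!
Writing `V(S) = c ∫ g(S E) dν` with `E > 0` the lognormal growth factor and `c = e^{-r(T-t)} ≤ 1`,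
two differentiations under the integral give `S² ∂²V/∂S² = c ∫ (S E)² g''(S E) dν`, and the
integrand is bounded by `M`. Differentiating under the integral is justified by the weight
`w(x) = x + x⁻¹`: the bound `|g''(x)| ≤ M x⁻² ≤ M w(x)²` integrates to polynomial growth of
`g'` and `g` in `w`, `w` is submultiplicative, and every power of `w(E)` is integrable since `E`
is the exponential of a Gaussian.
-/

open Real MeasureTheory ProbabilityTheory Set Filter Topology

namespace BlackScholes

noncomputable def weight (x : ℝ) : ℝ := x + x⁻¹

section Weight

variable {x y : ℝ}

lemma self_le_weight (hx : 0 < x) : x ≤ weight x := by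
  unfold weight; linarith [inv_pos.2 hx]

lemma inv_le_weight (hx : 0 < x) : x⁻¹ ≤ weight x := by
  unfold weight; linarith

lemma two_le_weight (hx : 0 < x) : 2 ≤ weight x := by
  have : weight x - 2 = (x - 1) ^ 2 / x := by unfold weight; field_simp; ring
  linarith [div_nonneg (sq_nonneg (x - 1)) hx.le]

lemma weight_pos (hx : 0 < x) : 0 < weight x := by linarith [two_le_weight hx]

lemma weight_mul_le (hx : 0 < x) (hy : 0 < y) : weight (x * y) ≤ weight x * weight y := by
  have : weight x * weight y - weight (x * y) = x * y⁻¹ + x⁻¹ * y := by unfold weight; ring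
  have : 0 ≤ x * y⁻¹ + x⁻¹ * y := by positivity
  linarith

lemma uIcc_one_subset_Ioi (hx : 0 < x) : uIcc 1 x ⊆ Ioi 0 := fun y hy => by
  rcases mem_uIcc.1 hy with h | h <;> exact mem_Ioi.2 (by linarith [h.1])

lemma weight_le_of_mem_uIcc (hx : 0 < x) (hy : y ∈ uIcc 1 x) : weight y ≤ weight x := by
  have hy0 : 0 < y := uIcc_one_subset_Ioi hx hy
  have : weight x - weight y = (x - y) * (x * y - 1) / (x * y) := by
    unfold weight; field_simp; ring
  have : 0 ≤ (x - y) * (x * y - 1) := by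
    rcases mem_uIcc.1 hy with ⟨h1, h2⟩ | ⟨h1, h2⟩
    · exact mul_nonneg (by linarith) (by nlinarith)
    · exact mul_nonneg_of_nonpos_of_nonpos (by linarith) (by nlinarith)
  linarith [div_nonneg this (mul_pos hx hy0).le]

lemma abs_sub_one_le_weight (hx : 0 < x) : |x - 1| ≤ weight x := by
  rw [abs_le]; unfold weight
  constructor <;> nlinarith [inv_pos.2 hx, mul_inv_cancel₀ hx.ne']

end Weight

lemma nonneg_of_abs_le_mul_weight_pow {φ : ℝ → ℝ} {C : ℝ} {n : ℕ}
    (hφ : ∀ y > 0, |φ y| ≤ C * weight y ^ n) : 0 ≤ C :=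
  nonneg_of_mul_nonneg_left ((abs_nonneg _).trans (hφ 1 one_pos)) (pow_pos (weight_pos one_pos) n)

lemma abs_le_weight_pow_succ {f : ℝ → ℝ} {B : ℝ} {n : ℕ} (hf : DifferentiableOn ℝ f (Ioi 0))
    (hf' : ∀ y > 0, |deriv f y| ≤ B * weight y ^ n) :
    ∀ x > 0, |f x| ≤ (|f 1| + B) * weight x ^ (n + 1) := by
  intro x hx
  have hB : 0 ≤ B := nonneg_of_abs_le_mul_weight_pow hf'
  have hmvt : ‖f x - f 1‖ ≤ B * weight x ^ n * ‖x - 1‖ :=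
    Convex.norm_image_sub_le_of_norm_deriv_le
      (fun y hy => hf.differentiableAt (Ioi_mem_nhds (uIcc_one_subset_Ioi hx hy)))
      (fun y hy => (hf' y (uIcc_one_subset_Ioi hx hy)).trans <| by
        have := weight_pos (uIcc_one_subset_Ioi hx hy)
        gcongr
        exact weight_le_of_mem_uIcc hx hy)
      (convex_uIcc 1 x) left_mem_uIcc right_mem_uIcc
  rw [Real.norm_eq_abs, Real.norm_eq_abs] at hmvt
  have hw := weight_pos hx
  have h1 : 1 ≤ weight x ^ (n + 1) := one_le_pow₀ (by linarith [two_le_weight hx])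
  calc |f x| ≤ |f 1| + |f x - f 1| := by linarith [abs_sub_abs_le_abs_sub (f x) (f 1)]
    _ ≤ |f 1| * weight x ^ (n + 1) + B * weight x ^ n * weight x := by
        gcongr
        · exact le_mul_of_one_le_right (abs_nonneg _) h1
        · exact hmvt.trans (by gcongr; exact abs_sub_one_le_weight hx)
    _ = (|f 1| + B) * weight x ^ (n + 1) := by ring

lemma abs_comp_mul_mul_pow_le {φ : ℝ → ℝ} {C : ℝ} {n : ℕ}
    (hφ : ∀ y > 0, |φ y| ≤ C * weight y ^ n) (k : ℕ) {x a : ℝ} (hx : 0 < x) (ha : 0 < a) :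
    |φ (x * a) * a ^ k| ≤ C * weight x ^ n * weight a ^ (n + k) := by
  have hC := nonneg_of_abs_le_mul_weight_pow hφ
  have := weight_pos hx
  have := weight_pos ha
  calc |φ (x * a) * a ^ k| = |φ (x * a)| * a ^ k := by
        rw [abs_mul, abs_of_pos (pow_pos ha k)]
    _ ≤ C * weight (x * a) ^ n * weight a ^ k :=
        mul_le_mul (hφ _ (mul_pos hx ha)) (pow_le_pow_left₀ ha.le (self_le_weight ha) k)
          (pow_nonneg ha.le k) (mul_nonneg hC (pow_nonneg (weight_pos (mul_pos hx ha)).le n))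
    _ ≤ C * (weight x * weight a) ^ n * weight a ^ k := by
        have := weight_pos (mul_pos hx ha)
        gcongr
        exact weight_mul_le hx ha
    _ = C * weight x ^ n * weight a ^ (n + k) := by ring

lemma abs_deriv_deriv_le_weight_sq {g : ℝ → ℝ} {M : ℝ}
    (hM : ∀ x > 0, x ^ 2 * |deriv (deriv g) x| ≤ M) :
    ∀ y > 0, |deriv (deriv g) y| ≤ M * weight y ^ 2 := by
  intro y hy
  have hw : y⁻¹ ^ 2 ≤ weight y ^ 2 := by
    have := inv_le_weight hy
    gcongr
  have hM0 : 0 ≤ M := (mul_nonneg (sq_nonneg 1) (abs_nonneg _)).trans (hM 1 one_pos)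
  calc |deriv (deriv g) y| = y⁻¹ ^ 2 * (y ^ 2 * |deriv (deriv g) y|) := by field_simp
    _ ≤ weight y ^ 2 * M := by gcongr; exact hM y hy
    _ = M * weight y ^ 2 := mul_comm _ _

lemma integrable_weight_exp_pow_gaussianReal (a b : ℝ) (n : ℕ) (μ : ℝ) (v : NNReal) :
    Integrable (fun z => weight (exp (a * z + b)) ^ n) (gaussianReal μ v) := by
  have hexp : ∀ (c : ℝ) z, exp (c * (a * z + b)) = exp (c * b) * exp (c * a * z) := fun c z => by
    rw [← exp_add]; ring_nf
  refine ((((integrable_exp_mul_gaussianReal (n * a)).const_mul (exp (n * b))).add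
    ((integrable_exp_mul_gaussianReal (-n * a)).const_mul (exp (-n * b)))).const_mul
      (2 ^ (n - 1))).mono' (by unfold weight; fun_prop) (ae_of_all _ fun z => ?_)
  have hw := weight_pos (exp_pos (a * z + b))
  simp only [Pi.add_apply]
  rw [Real.norm_eq_abs, abs_of_nonneg (pow_nonneg hw.le n), ← hexp, ← hexp, weight]
  calc (exp (a * z + b) + (exp (a * z + b))⁻¹) ^ n
      ≤ 2 ^ (n - 1) * (exp (a * z + b) ^ n + (exp (a * z + b))⁻¹ ^ n) :=
        add_pow_le (exp_pos _).le (inv_pos.2 (exp_pos _)).le n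
    _ = 2 ^ (n - 1) * (exp (n * (a * z + b)) + exp (-n * (a * z + b))) := by
        rw [← exp_neg, ← exp_nat_mul, ← exp_nat_mul, neg_mul, mul_neg]

section Integral

variable {Ω : Type*} [MeasurableSpace Ω] [TopologicalSpace Ω] [OpensMeasurableSpace Ω]
  {ν : Measure Ω} {E : Ω → ℝ}

lemma hasDerivAt_integral_comp_mul_mul_pow (hE_pos : ∀ z, 0 < E z) (hE : Continuous E)
    {f : ℝ → ℝ} {B : ℝ} {m : ℕ} (k : ℕ) (hf : DifferentiableOn ℝ f (Ioi 0))
    (hf'_cont : ContinuousOn (deriv f) (Ioi 0)) (hf' : ∀ y > 0, |deriv f y| ≤ B * weight y ^ m)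
    (hint : Integrable (fun z => weight (E z) ^ (m + k + 1)) ν) {s : ℝ} (hs : 0 < s) :
    HasDerivAt (fun x => ∫ z, f (x * E z) * E z ^ k ∂ν)
      (∫ z, deriv f (s * E z) * E z ^ (k + 1) ∂ν) s := by
  have hcomp : ∀ {φ : ℝ → ℝ}, ContinuousOn φ (Ioi 0) → ∀ {x : ℝ}, 0 < x →
      Continuous fun z => φ (x * E z) := fun hφ x hx =>
    hφ.comp_continuous (continuous_const.mul hE) fun z => mul_pos hx (hE_pos z)
  have hnhds : Ioo (s / 2) (2 * s) ∈ 𝓝 s := Ioo_mem_nhds (by linarith) (by linarith)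
  have hweight : ∀ x ∈ Ioo (s / 2) (2 * s), 0 < x ∧ weight x ≤ 2 * weight s := by
    rintro x ⟨hx1, hx2⟩
    have hx : 0 < x := by linarith
    refine ⟨hx, ?_⟩
    have : x⁻¹ ≤ 2 * s⁻¹ := by
      rw [inv_le_comm₀ hx (by positivity), mul_inv, inv_inv]; linarith
    unfold weight; linarith
  have hf_growth := abs_le_weight_pow_succ hf hf'
  apply (hasDerivAt_integral_of_dominated_loc_of_deriv_le hnhds
    (bound := fun z => B * (2 * weight s) ^ m * weight (E z) ^ (m + k + 1)) ?_ ?_ ?_ ?_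
    (hint.const_mul _) ?_).2
  · filter_upwards [Ioi_mem_nhds hs] with x hx
    exact ((hcomp hf.continuousOn hx).mul (hE.pow k)).aestronglyMeasurable
  · refine (hint.const_mul ((|f 1| + B) * weight s ^ (m + 1))).mono'
      ((hcomp hf.continuousOn hs).mul (hE.pow k)).aestronglyMeasurable (ae_of_all _ fun z => ?_)
    have := abs_comp_mul_mul_pow_le hf_growth k hs (hE_pos z)
    rwa [Real.norm_eq_abs, ← add_right_comm m 1 k]
  · exact ((hcomp hf'_cont hs).mul (hE.pow _)).aestronglyMeasurable
  · refine ae_of_all _ fun z x hx => ?_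
    obtain ⟨hx0, hwx⟩ := hweight x hx
    have := abs_comp_mul_mul_pow_le hf' (k + 1) hx0 (hE_pos z)
    rw [Real.norm_eq_abs, add_assoc]
    refine this.trans ?_
    have := nonneg_of_abs_le_mul_weight_pow hf'
    have := weight_pos hx0
    have := weight_pos (hE_pos z)
    gcongr
  · refine ae_of_all _ fun z x hx => ?_
    have hxE : 0 < x * E z := mul_pos (hweight x hx).1 (hE_pos z)
    exact (((hf.differentiableAt (Ioi_mem_nhds hxE)).hasDerivAt.comp x
      (hasDerivAt_mul_const (E z))).mul_const (E z ^ k)).congr_deriv (by ring)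

variable {g : ℝ → ℝ} {M : ℝ}

variable {Ω : Type*} [MeasurableSpace Ω] [TopologicalSpace Ω] [OpensMeasurableSpace Ω]
  {ν : Measure Ω} {E : Ω → ℝ}

lemma deriv_deriv_integral_comp_mul (hE_pos : ∀ z, 0 < E z) (hE : Continuous E)
    (hg : ContDiffOn ℝ 2 g (Ioi 0)) (hM : ∀ x > 0, x ^ 2 * |deriv (deriv g) x| ≤ M)
    (hint : Integrable (fun z => weight (E z) ^ 4) ν) {s : ℝ} (hs : 0 < s) :
    deriv (deriv fun x => ∫ z, g (x * E z) ∂ν) s =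
      ∫ z, deriv (deriv g) (s * E z) * E z ^ 2 ∂ν := by
  have hg' : ContDiffOn ℝ 1 (deriv g) (Ioi 0) := by
    simpa using hg.deriv_of_isOpen (m := 1) isOpen_Ioi (by norm_num)
  have hg'' : ∀ y > 0, |deriv (deriv g) y| ≤ M * weight y ^ 2 := abs_deriv_deriv_le_weight_sq hM
  have hg'_growth := abs_le_weight_pow_succ (hg'.differentiableOn one_ne_zero) hg''
  have hfirst : ∀ x > 0, HasDerivAt (fun x => ∫ z, g (x * E z) ∂ν)
      (∫ z, deriv g (x * E z) * E z ^ 1 ∂ν) x := fun x hx => by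
    simpa using hasDerivAt_integral_comp_mul_mul_pow hE_pos hE 0
      (hg.differentiableOn two_ne_zero) hg'.continuousOn hg'_growth hint hx
  have hsecond := hasDerivAt_integral_comp_mul_mul_pow hE_pos hE 1
    (hg'.differentiableOn one_ne_zero) (hg'.continuousOn_deriv_of_isOpen isOpen_Ioi le_rfl) hg''
    hint hs
  have hderiv : deriv (fun x => ∫ z, g (x * E z) ∂ν) =ᶠ[𝓝 s]
      fun x => ∫ z, deriv g (x * E z) * E z ^ 1 ∂ν := by
    filter_upwards [Ioi_mem_nhds hs] with x hx using (hfirst x hx).deriv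
  rw [hderiv.deriv_eq]
  exact hsecond.deriv

lemma abs_sq_mul_deriv_deriv_integral_comp_mul_le [IsProbabilityMeasure ν]
    (hE_pos : ∀ z, 0 < E z) (hE : Continuous E)
    (hg : ContDiffOn ℝ 2 g (Ioi 0)) (hM : ∀ x > 0, x ^ 2 * |deriv (deriv g) x| ≤ M)
    (hint : Integrable (fun z => weight (E z) ^ 4) ν) {s : ℝ} (hs : 0 < s) :
    |s ^ 2 * deriv (deriv fun x => ∫ z, g (x * E z) ∂ν) s| ≤ M := by
  rw [deriv_deriv_integral_comp_mul hE_pos hE hg hM hint hs, ← integral_const_mul]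
  have hle : ∀ z, ‖s ^ 2 * (deriv (deriv g) (s * E z) * E z ^ 2)‖ ≤ M := fun z => by
    rw [Real.norm_eq_abs, show s ^ 2 * (deriv (deriv g) (s * E z) * E z ^ 2)
      = (s * E z) ^ 2 * deriv (deriv g) (s * E z) by ring, abs_mul, abs_sq]
    exact hM _ (mul_pos hs (hE_pos z))
  simpa using norm_integral_le_of_norm_le_const (ae_of_all ν hle)

end Integral

end BlackScholes

open BlackScholes

theorem stmt1_general (T r σ : ℝ) (hr : 0 ≤ r)
    (g : ℝ → ℝ) (hg : ContDiffOn ℝ 2 g (Set.Ioi 0))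
    (M : ℝ) (hM : ∀ x > 0, x ^ 2 * |deriv (deriv g) x| ≤ M)
    (V : ℝ → ℝ → ℝ)
    (hV : ∀ S t, 0 < S → t ∈ Set.Icc 0 T →
      V S t = Real.exp (-r * (T - t)) *
        ∫ z, g (S * Real.exp (σ * z + (r - σ ^ 2 / 2) * (T - t)))
          ∂(gaussianReal 0 (Real.toNNReal (T - t)))) :
    ∀ S t, 0 < S → t ∈ Set.Icc 0 T →
      |S ^ 2 * deriv (deriv (fun s => V s t)) S| ≤ M := by
  intro S t hS ht
  set discount := Real.exp (-r * (T - t))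
  have hdiscount : discount ≤ 1 := exp_le_one_iff.2 (by nlinarith [ht.2])
  have hV_near : (fun s => V s t) =ᶠ[𝓝 S] fun s => discount *
      ∫ z, g (s * Real.exp (σ * z + (r - σ ^ 2 / 2) * (T - t)))
        ∂(gaussianReal 0 (Real.toNNReal (T - t))) := by
    filter_upwards [Ioi_mem_nhds hS] with s hs using hV s t hs ht
  have hint := integrable_weight_exp_pow_gaussianReal σ ((r - σ ^ 2 / 2) * (T - t)) 4 0
    (T - t).toNNReal
  have hgamma := abs_sq_mul_deriv_deriv_integral_comp_mul_le (fun z => exp_pos _)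
    (by fun_prop) hg hM hint hS
  rw [hV_near.deriv.deriv_eq, deriv_const_mul_field', deriv_const_mul_field', mul_left_comm,
    abs_mul, abs_of_pos (exp_pos _)]
  exact (mul_le_of_le_one_left (abs_nonneg _) hdiscount).trans hgamma

/-- the cash gamma of the Black-Scholes price of a claim is bounded by the
cash gamma of the payoff. -/
theorem stmt1 (T r σ : ℝ) (hT : 0 < T) (hr : 0 ≤ r) (hσ : 0 < σ)
    (g : ℝ → ℝ) (hg : ContDiffOn ℝ 2 g (Set.Ioi 0)) (hgnn : ∀ x > 0, 0 ≤ g x)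
    (M : ℝ) (hM : ∀ x > 0, x ^ 2 * |deriv (deriv g) x| ≤ M)
    (V : ℝ → ℝ → ℝ)
    (hV : ∀ S t, 0 < S → t ∈ Set.Icc 0 T →
      V S t = Real.exp (-r * (T - t)) *
        ∫ z, g (S * Real.exp (σ * z + (r - σ ^ 2 / 2) * (T - t)))
          ∂(gaussianReal 0 (Real.toNNReal (T - t)))) :
    ∀ S t, 0 < S → t ∈ Set.Icc 0 T →
      |S ^ 2 * deriv (deriv (fun s => V s t)) S| ≤ M :=
  stmt1_general T r σ hr g hg M hM V hV
end

section
/- Suppose g : (0,∞) → [0,∞) is C² and sup_{x>0}|g(x) − x g'(x)| < ∞. Let V₀(S,t) = e^{−r(T−t)} E[g(S_T)] with S_T = S e^{σ(Z_T−Z_t)+(r−σ²/2)(T−t)}. Then for all S > 0, t ∈ [0,T], |V₀(S,t) − S ∂V₀/∂S(S,t)| ≤ sup_{x>0}|g(x) − x g'(x)|. -/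
/-!
Writing `S_T = S w` with `w > 0` independent of `S`, one has
`V₀ - S ∂V₀/∂S = e^{-r(T-t)} E[g(S_T) - S_T g'(S_T)]`, which is at most `M` in absolute
value because the discount factor is at most `1`. The only analytic work is to justify
differentiating under the expectation. For that, note that the perspective `u ↦ u g(1/u)` has
derivative `g(x) - x g'(x)` at `u = 1/x`, so it is `M`-Lipschitz on `(0, ∞)`; this gives linear
growth of `g` and of `x g'(x)`, and the lognormal `w` has a finite mean.
-/

open Real MeasureTheory ProbabilityTheory Set

section LinearGrowth

variable {g : ℝ → ℝ} {M : ℝ}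

lemma hasDerivAt_mul_comp_inv {x : ℝ} (hx : x ≠ 0) (hg : DifferentiableAt ℝ g x⁻¹) :
    HasDerivAt (fun u => u * g u⁻¹) (g x⁻¹ - x⁻¹ * deriv g x⁻¹) x := by
  have h : HasDerivAt (fun u => u * g u⁻¹)
      (1 * g x⁻¹ + x * (deriv g x⁻¹ * -(x ^ 2)⁻¹)) x :=
    (hasDerivAt_id' x).mul (hg.hasDerivAt.comp x (hasDerivAt_inv hx))
  convert h using 1
  field_simp
  ring

variable (hg : DifferentiableOn ℝ g (Ioi 0)) (hM : ∀ x > 0, |g x - x * deriv g x| ≤ M)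
include hg hM

lemma abs_sub_mul_le_of_abs_sub_mul_deriv_le {x : ℝ} (hx : 0 < x) :
    |g x - x * g 1| ≤ M * |1 - x| := by
  have hLip := (convex_Ioi (0 : ℝ)).norm_image_sub_le_of_norm_hasDerivWithin_le
    (f := fun u => u * g u⁻¹) (fun u (hu : 0 < u) =>
      (hasDerivAt_mul_comp_inv hu.ne'
        (hg.differentiableAt (Ioi_mem_nhds (inv_pos.2 hu)))).hasDerivWithinAt)
    (fun u (hu : 0 < u) => hM _ (inv_pos.2 hu)) (mem_Ioi.2 one_pos) (mem_Ioi.2 (inv_pos.2 hx))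
  simp only [Real.norm_eq_abs, inv_inv, inv_one, one_mul] at hLip
  have hx1 : 1 - x = x * (x⁻¹ - 1) := by field_simp
  calc |g x - x * g 1| = x * |x⁻¹ * g x - g 1| := by
        rw [← abs_of_pos hx, ← abs_mul, abs_of_pos hx]; congr 1; field_simp
    _ ≤ x * (M * |x⁻¹ - 1|) := by gcongr
    _ = M * |1 - x| := by rw [hx1, abs_mul, abs_of_pos hx]; ring

lemma abs_le_of_abs_sub_mul_deriv_le {x : ℝ} (hx : 0 < x) :
    |g x| ≤ (|g 1| + M) * x + M := by
  have h := abs_sub_mul_le_of_abs_sub_mul_deriv_le hg hM hx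
  have hM0 : 0 ≤ M := (abs_nonneg _).trans (hM 1 one_pos)
  have h1x : |1 - x| ≤ 1 + x := (abs_sub _ _).trans (by rw [abs_one, abs_of_pos hx])
  calc |g x| ≤ |g x - x * g 1| + |x * g 1| := by
        linarith [abs_sub_abs_le_abs_sub (g x) (x * g 1)]
    _ ≤ M * (1 + x) + x * |g 1| := by
        rw [abs_mul, abs_of_pos hx]; gcongr; exact h.trans (by gcongr)
    _ = (|g 1| + M) * x + M := by ring

lemma abs_mul_deriv_mul_le_of_abs_sub_mul_deriv_le {x y : ℝ} (hx : 0 < x) (hy : 0 < y) :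
    |y * deriv g (x * y)| ≤ (|g 1| + M) * y + 2 * M / x := by
  have hxy := mul_pos hx hy
  have h := (abs_sub_abs_le_abs_sub (x * y * deriv g (x * y)) (g (x * y))).trans
    ((abs_sub_comm _ _).trans_le (hM _ hxy))
  have hgrowth := abs_le_of_abs_sub_mul_deriv_le hg hM hxy
  have hscale : y * deriv g (x * y) = x * y * deriv g (x * y) / x := by field_simp
  rw [hscale, abs_div, abs_of_pos hx, div_le_iff₀ hx, add_mul, div_mul_cancel₀ _ hx.ne']
  rw [abs_mul (x * y), abs_of_pos hxy] at h ⊢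
  linarith

end LinearGrowth

section ScaledIntegral

variable {α : Type*} [TopologicalSpace α] [MeasurableSpace α] [OpensMeasurableSpace α]
  {μ : Measure α} {w : α → ℝ} {g : ℝ → ℝ} {M : ℝ}
  (hg : DifferentiableOn ℝ g (Ioi 0)) (hM : ∀ x > 0, |g x - x * deriv g x| ≤ M)
  (hw : Continuous w) (hw_pos : ∀ z, 0 < w z) (hw_int : Integrable w μ)
include hg hM hw hw_pos hw_int

lemma integrable_comp_mul_of_abs_sub_mul_deriv_le [IsFiniteMeasure μ] {s : ℝ} (hs : 0 < s) :
    Integrable (fun z => g (s * w z)) μ := by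
  have hmeas : AEStronglyMeasurable (fun z => g (s * w z)) μ :=
    (hg.continuousOn.comp_continuous (by fun_prop)
      fun z => mul_pos hs (hw_pos z)).aestronglyMeasurable
  refine ((hw_int.const_mul ((|g 1| + M) * s)).add (integrable_const M)).mono' hmeas
    (ae_of_all _ fun z => ?_)
  calc ‖g (s * w z)‖ ≤ (|g 1| + M) * (s * w z) + M :=
        abs_le_of_abs_sub_mul_deriv_le hg hM (mul_pos hs (hw_pos z))
    _ = (|g 1| + M) * s * w z + M := by ring

lemma integrable_and_hasDerivAt_integral_comp_mul [IsFiniteMeasure μ] {S : ℝ} (hS : 0 < S) :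
    Integrable (fun z => w z * deriv g (S * w z)) μ ∧
      HasDerivAt (fun s => ∫ z, g (s * w z) ∂μ) (∫ z, w z * deriv g (S * w z) ∂μ) S := by
  have hbound : ∀ z, ∀ s ∈ Ioi (S / 2),
      ‖w z * deriv g (s * w z)‖ ≤ (|g 1| + M) * w z + 4 * M / S :=
    fun z s (hs : S / 2 < s) => by
      have hs0 : 0 < s := (half_pos hS).trans hs
      have hM0 : 0 ≤ M := (abs_nonneg _).trans (hM 1 one_pos)
      have h2M : 2 * M / s ≤ 4 * M / S := by
        rw [div_le_div_iff₀ hs0 hS]; nlinarith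
      exact (abs_mul_deriv_mul_le_of_abs_sub_mul_deriv_le hg hM hs0 (hw_pos z)).trans (by linarith)
  refine hasDerivAt_integral_of_dominated_loc_of_deriv_le (Ioi_mem_nhds (half_lt_self hS))
    (Filter.eventually_of_mem (Ioi_mem_nhds hS) fun s hs =>
      (integrable_comp_mul_of_abs_sub_mul_deriv_le hg hM hw hw_pos hw_int hs).aestronglyMeasurable)
    (integrable_comp_mul_of_abs_sub_mul_deriv_le hg hM hw hw_pos hw_int hS)
    (hw.measurable.mul ((measurable_deriv g).comp
      (hw.measurable.const_mul S))).aestronglyMeasurable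
    (ae_of_all _ hbound) ((hw_int.const_mul _).add (integrable_const _))
    (ae_of_all _ fun z s hs => ?_)
  have hsw : 0 < s * w z := mul_pos ((half_pos hS).trans hs) (hw_pos z)
  have h := (hg.differentiableAt (Ioi_mem_nhds hsw)).hasDerivAt.comp s
    (hasDerivAt_mul_const (w z))
  rwa [mul_comm (deriv g _)] at h

lemma abs_integral_comp_mul_sub_mul_deriv_le [IsProbabilityMeasure μ] {S : ℝ} (hS : 0 < S) :
    |∫ z, g (S * w z) ∂μ - S * ∫ z, w z * deriv g (S * w z) ∂μ| ≤ M := by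
  have hF' := (integrable_and_hasDerivAt_integral_comp_mul hg hM hw hw_pos hw_int hS).1
  rw [← integral_const_mul, ← integral_sub
    (integrable_comp_mul_of_abs_sub_mul_deriv_le hg hM hw hw_pos hw_int hS) (hF'.const_mul S)]
  have hpt : ∀ z, ‖g (S * w z) - S * (w z * deriv g (S * w z))‖ ≤ M := fun z => by
    simpa only [← mul_assoc, Real.norm_eq_abs] using hM _ (mul_pos hS (hw_pos z))
  simpa using norm_integral_le_of_norm_le_const (μ := μ) (ae_of_all _ hpt)

end ScaledIntegral

lemma integrable_exp_mul_add_gaussianReal (m : ℝ) (v : NNReal) (a c : ℝ) :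
    Integrable (fun z => rexp (a * z + c)) (gaussianReal m v) := by
  simpa only [exp_add, mul_comm (rexp (a * _))] using
    (integrable_exp_mul_gaussianReal (μ := m) (v := v) a).mul_const (rexp c)

theorem stmt2_general (T r σ : ℝ) (hr : 0 ≤ r)
    (g : ℝ → ℝ) (hg : ContDiffOn ℝ 2 g (Set.Ioi 0))
    (M : ℝ) (hM : ∀ x > 0, |g x - x * deriv g x| ≤ M)
    (V : ℝ → ℝ → ℝ)
    (hV : ∀ S t, 0 < S → t ∈ Set.Icc 0 T →
      V S t = Real.exp (-r * (T - t)) *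
        ∫ z, g (S * Real.exp (σ * z + (r - σ ^ 2 / 2) * (T - t)))
          ∂(gaussianReal 0 (Real.toNNReal (T - t)))) :
    ∀ S t, 0 < S → t ∈ Set.Icc 0 T →
      |V S t - S * deriv (fun s => V s t) S| ≤ M := by
  intro S t hS ht
  set c := (r - σ ^ 2 / 2) * (T - t)
  set μ := gaussianReal 0 (T - t).toNNReal
  set D := ∫ z, rexp (σ * z + c) * deriv g (S * rexp (σ * z + c)) ∂μ
  have hgd : DifferentiableOn ℝ g (Ioi 0) := hg.differentiableOn (by norm_num)
  have hw : Continuous fun z : ℝ => rexp (σ * z + c) := by fun_prop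
  have hw_int := integrable_exp_mul_add_gaussianReal 0 (T - t).toNNReal σ c
  have hF := (integrable_and_hasDerivAt_integral_comp_mul hgd hM hw (fun _ => exp_pos _)
    hw_int hS).2
  have hV' : HasDerivAt (fun s => V s t) (rexp (-r * (T - t)) * D) S :=
    (hF.const_mul _).congr_of_eventuallyEq
      (Filter.eventually_of_mem (Ioi_mem_nhds hS) fun s hs => hV s t hs ht)
  have hdiscount : rexp (-r * (T - t)) ≤ 1 := exp_le_one_iff.2 (by nlinarith [ht.2])
  rw [hV S t hS ht, hV'.deriv, mul_left_comm, ← mul_sub, abs_mul, abs_of_pos (exp_pos _)]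
  exact (mul_le_of_le_one_left (abs_nonneg _) hdiscount).trans
    (abs_integral_comp_mul_sub_mul_deriv_le hgd hM hw (fun _ => exp_pos _) hw_int hS)

/-- |V₀ − S ∂V₀/∂S| is bounded by sup |g − x g'| for the Black-Scholes price. -/
theorem stmt2 (T r σ : ℝ) (hT : 0 < T) (hr : 0 ≤ r) (hσ : 0 < σ)
    (g : ℝ → ℝ) (hg : ContDiffOn ℝ 2 g (Set.Ioi 0)) (hgnn : ∀ x > 0, 0 ≤ g x)
    (M : ℝ) (hM : ∀ x > 0, |g x - x * deriv g x| ≤ M)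
    (V : ℝ → ℝ → ℝ)
    (hV : ∀ S t, 0 < S → t ∈ Set.Icc 0 T →
      V S t = Real.exp (-r * (T - t)) *
        ∫ z, g (S * Real.exp (σ * z + (r - σ ^ 2 / 2) * (T - t)))
          ∂(gaussianReal 0 (Real.toNNReal (T - t)))) :
    ∀ S t, 0 < S → t ∈ Set.Icc 0 T →
      |V S t - S * deriv (fun s => V s t) S| ≤ M :=
  stmt2_general T r σ hr g hg M hM V hV
end
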